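/- arXiv:1003.0816 — 3 statements merged into one kernel-verified Lean document; each statement's English description precedes it below -/
import Mathlib

section
/- Let A = K[u_0,...,u_d] be a polynomial ring over a field K of characteristic zero, and let F(t) = u_0 + u_1 t + ... + u_d t^d ∈ A[t]. For 0 ≤ i ≤ l < d, set z_i = F^{(i)}(t)/i!. Then the sequence z_l, z_{l-1}, ..., z_0 is a regular sequence in A[t]. -/
/-!
Write `A = K[u_0, …, u_d]` and `G(X) = F.map C ∈ A[t][X]`, the generic polynomial with its
variable renamed. By Taylor's formula, `z_i = F^{(i)}/i! = hasseDeriv i F` is the coefficient of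
`X^i` in `G(X + t) = ∑_j u_j (X + t)^j`. For `s ∈ A[t]`, let `Φ_s` be the `K[t]`-algebra
endomorphism of `A[t]` sending `u_i` to the coefficient of `X^i` in `G(X + s)`. Applying `Φ_s` to
the coefficients of `G` gives `G(X + s)`. Hence `Φ_{s'} ∘ Φ_s = Φ_{s + s'}` whenever `Φ_{s'}` fixes
`s`, so `Φ_t` is an automorphism with inverse `Φ_{-t}`. It maps `u_l, …, u_0` to
`z_l, …, z_0`, so it suffices that distinct variables form a regular sequence. That holds because
`p` lies in `(u_k : k ∈ ks)` iff `p` vanishes after setting those `u_k` to zero.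
-/

namespace MvPolynomial

variable {R σ : Type*} [CommRing R] [DecidableEq σ]

noncomputable def killVars (ks : List σ) : MvPolynomial σ R →ₐ[R] MvPolynomial σ R :=
  aeval fun j => if j ∈ ks then 0 else X j

@[simp] lemma killVars_X_of_mem {ks : List σ} {j : σ} (hj : j ∈ ks) :
    killVars (R := R) ks (X j) = 0 := by
  simp [killVars, hj]

@[simp] lemma killVars_X_of_notMem {ks : List σ} {j : σ} (hj : j ∉ ks) :
    killVars (R := R) ks (X j) = X j := by
  simp [killVars, hj]

lemma sub_killVars_mem_ofList (ks : List σ) (p : MvPolynomial σ R) :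
    p - killVars ks p ∈ Ideal.ofList (ks.map X) := by
  induction p using MvPolynomial.induction_on with
  | C a => simp [killVars]
  | add p q hp hq => simpa [add_sub_add_comm] using add_mem hp hq
  | mul_X p j hp =>
    by_cases hj : j ∈ ks
    · rw [map_mul, killVars_X_of_mem hj, mul_zero, sub_zero]
      exact Ideal.mul_mem_left _ _ (Ideal.subset_span (List.mem_map_of_mem hj))
    · rw [map_mul, killVars_X_of_notMem hj, ← sub_mul]
      exact Ideal.mul_mem_right _ _ hp

lemma mem_ofList_map_X_iff {ks : List σ} {p : MvPolynomial σ R} :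
    p ∈ Ideal.ofList (ks.map X) ↔ killVars ks p = 0 := by
  refine ⟨fun hp => ?_, fun hp => by simpa [hp] using sub_killVars_mem_ofList ks p⟩
  suffices Ideal.ofList (ks.map X) ≤ RingHom.ker (killVars (R := R) ks) from this hp
  rw [Ideal.ofList, Ideal.span_le]
  intro x hx
  obtain ⟨j, hj, rfl⟩ := List.mem_map.mp hx
  simp [hj]

lemma isSMulRegular_X_quotient_ofList {ks : List σ} {j : σ} (hj : j ∉ ks) :
    IsSMulRegular (MvPolynomial σ R ⧸ (Ideal.ofList (ks.map (X (R := R))) • ⊤ :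
      Submodule (MvPolynomial σ R) (MvPolynomial σ R))) (X (R := R) j) := by
  rw [isSMulRegular_quotient_iff_mem_of_smul_mem, smul_eq_mul, Ideal.mul_top]
  intro p hp
  rw [mem_ofList_map_X_iff, smul_eq_mul, map_mul, killVars_X_of_notMem hj] at hp
  exact mem_ofList_map_X_iff.mpr ((isRegular_X (R := R) (n := j)).left.mul_left_eq_zero_iff.mp hp)

theorem isRegular_map_X [Nontrivial R] {js : List σ} (hjs : js.Nodup) :
    RingTheory.Sequence.IsRegular (MvPolynomial σ R) (js.map (X (R := R))) := by
  refine ⟨(RingTheory.Sequence.isWeaklyRegular_iff _ _).mpr fun i hi => ?_, ?_⟩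
  · rw [List.getElem_map, ← List.map_take]
    refine isSMulRegular_X_quotient_ofList fun hmem => List.disjoint_take_drop hjs le_rfl hmem ?_
    exact List.mem_drop_iff_getElem.mpr ⟨0, by simpa using hi, by simp⟩
  · rw [smul_eq_mul, Ideal.mul_top, ne_comm, Ne, Ideal.eq_top_iff_one, mem_ofList_map_X_iff,
      map_one]
    exact one_ne_zero

end MvPolynomial

lemma RingTheory.Sequence.IsRegular.map_ringEquiv {S S' : Type*} [CommRing S] [CommRing S']
    {rs : List S} (h : IsRegular S rs) (e : S ≃+* S') : IsRegular S' (rs.map e) :=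
  (e.toAddEquiv.isRegular_congr (List.forall₂_map_right_iff.mpr
    (List.forall₂_same.mpr fun r _ x => map_mul e r x))).mp h

open Polynomial

lemma Polynomial.hasseDeriv_map {R S : Type*} [Semiring R] [Semiring S] (f : R →+* S) (k : ℕ)
    (p : R[X]) : hasseDeriv k (p.map f) = (hasseDeriv k p).map f := by
  ext n
  simp [hasseDeriv_coeff]

lemma Polynomial.hasseDeriv_eq_inv_factorial_smul_iterate_derivative {K A : Type*} [Field K]
    [CharZero K] [Semiring A] [Algebra K A] (k : ℕ) (p : A[X]) :
    hasseDeriv k p = (k.factorial : K)⁻¹ • derivative^[k] p := by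
  rw [← factorial_smul_hasseDeriv, LinearMap.smul_apply, ← Nat.cast_smul_eq_nsmul K, smul_smul,
    inv_mul_cancel₀ (by exact_mod_cast k.factorial_ne_zero), one_smul]

section GenericTaylorShift

variable (K : Type*) [CommRing K] (n : ℕ)

noncomputable def genericPoly : (MvPolynomial (Fin n) K)[X] :=
  ∑ i : Fin n, C (MvPolynomial.X i) * X ^ (i : ℕ)

lemma degree_genericPoly_lt : (genericPoly K n).degree < n :=
  degree_sum_fin_lt _

lemma coeff_genericPoly (i : Fin n) : (genericPoly K n).coeff i = MvPolynomial.X i := by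
  simp [genericPoly, Fin.val_inj]

lemma coeff_genericPoly_of_le {i : ℕ} (hi : n ≤ i) : (genericPoly K n).coeff i = 0 :=
  coeff_eq_zero_of_degree_lt ((degree_genericPoly_lt K n).trans_le (by exact_mod_cast hi))

variable {K n}

noncomputable def genericTaylorShift (s : (MvPolynomial (Fin n) K)[X]) :
    (MvPolynomial (Fin n) K)[X] →ₐ[K] (MvPolynomial (Fin n) K)[X] :=
  aevalTower (MvPolynomial.aeval fun i => (taylor s ((genericPoly K n).map C)).coeff i) X

@[simp] lemma genericTaylorShift_X (s : (MvPolynomial (Fin n) K)[X]) :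
    genericTaylorShift s X = X :=
  aevalTower_X _ _

@[simp] lemma genericTaylorShift_C_X (s : (MvPolynomial (Fin n) K)[X]) (i : Fin n) :
    genericTaylorShift s (C (MvPolynomial.X i)) =
      (taylor s ((genericPoly K n).map C)).coeff i := by
  simp [genericTaylorShift]

lemma map_genericTaylorShift_genericPoly (s : (MvPolynomial (Fin n) K)[X]) :
    ((genericPoly K n).map C).map (genericTaylorShift s : _ →+* _) =
      taylor s ((genericPoly K n).map C) := by
  ext i : 1
  rw [coeff_map, coeff_map]
  by_cases hi : i < n
  · simpa using congrArg (fun p => genericTaylorShift s (C p)) (coeff_genericPoly K n ⟨i, hi⟩)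
  · rw [coeff_genericPoly_of_le K n (not_lt.mp hi), C_0, map_zero, eq_comm]
    refine coeff_eq_zero_of_degree_lt ?_
    rw [degree_taylor]
    exact degree_map_le.trans_lt
      ((degree_genericPoly_lt K n).trans_le (by exact_mod_cast not_lt.mp hi))

lemma genericTaylorShift_zero :
    genericTaylorShift (0 : (MvPolynomial (Fin n) K)[X]) = AlgHom.id K _ := by
  refine algHom_ext' (MvPolynomial.algHom_ext fun i => ?_) (by simp)
  simp [coeff_genericPoly]

lemma genericTaylorShift_comp_genericTaylorShift {s s' : (MvPolynomial (Fin n) K)[X]}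
    (hs : genericTaylorShift s' s = s) :
    (genericTaylorShift s').comp (genericTaylorShift s) = genericTaylorShift (s + s') := by
  refine algHom_ext' (MvPolynomial.algHom_ext fun i => ?_) (by simp)
  set G := (genericPoly K n).map C
  let φ : (MvPolynomial (Fin n) K)[X] →+* (MvPolynomial (Fin n) K)[X] := genericTaylorShift s'
  calc genericTaylorShift s' (genericTaylorShift s (C (MvPolynomial.X i)))
      = ((taylor s G).map φ).coeff i := by rw [genericTaylorShift_C_X, coeff_map]; rfl
    _ = (taylor s (taylor s' G)).coeff i := by
      rw [map_taylor, map_genericTaylorShift_genericPoly, RingHom.coe_coe, hs]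
    _ = genericTaylorShift (s + s') (C (MvPolynomial.X i)) := by
      rw [taylor_taylor, genericTaylorShift_C_X]

noncomputable def genericTaylorShiftEquiv :
    (MvPolynomial (Fin n) K)[X] ≃ₐ[K] (MvPolynomial (Fin n) K)[X] :=
  AlgEquiv.ofAlgHom (genericTaylorShift X) (genericTaylorShift (-X))
    (by rw [genericTaylorShift_comp_genericTaylorShift (by simp), neg_add_cancel,
      genericTaylorShift_zero])
    (by rw [genericTaylorShift_comp_genericTaylorShift (by simp), add_neg_cancel,
      genericTaylorShift_zero])

lemma genericTaylorShiftEquiv_C_X (i : Fin n) :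
    genericTaylorShiftEquiv (C (MvPolynomial.X i)) = hasseDeriv i (genericPoly K n) := by
  rw [genericTaylorShiftEquiv, AlgEquiv.ofAlgHom_apply, genericTaylorShift_C_X, taylor_coeff,
    hasseDeriv_map, eval_map, eval₂_C_X]

end GenericTaylorShift

/-- For `F(t) = u_0 + u_1 t + ... + u_d t^d` over `A = K[u_0,...,u_d]`,
`K` a field of characteristic zero, and `z_i = F^{(i)}(t)/i!`, the sequence
`z_l, z_{l-1}, ..., z_0` (for `l < d`) is a regular sequence in `A[t]`. -/
theorem stmt_1 (K : Type*) [Field K] [CharZero K] (d l : ℕ) (hl : l < d)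
    (F : Polynomial (MvPolynomial (Fin (d + 1)) K))
    (hF : F = ∑ i : Fin (d + 1),
        Polynomial.C (MvPolynomial.X i) * Polynomial.X ^ (i : ℕ))
    (z : ℕ → Polynomial (MvPolynomial (Fin (d + 1)) K))
    (hz : ∀ i, z i = ((Nat.factorial i : K)⁻¹) • Polynomial.derivative^[i] F) :
    RingTheory.Sequence.IsRegular (Polynomial (MvPolynomial (Fin (d + 1)) K))
      ((List.range (l + 1)).reverse.map z) := by
  have hz_shift (i : Fin (d + 1)) : z i = genericTaylorShiftEquiv (C (MvPolynomial.X i)) := by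
    rw [hz, ← hasseDeriv_eq_inv_factorial_smul_iterate_derivative, hF]
    exact (genericTaylorShiftEquiv_C_X i).symm
  set js := (List.finRange (l + 1)).reverse.map (Fin.castLE (by omega : l + 1 ≤ d + 1))
  have hjs : js.Nodup :=
    (List.nodup_reverse.mpr (List.nodup_finRange _)).map (Fin.castLE_injective _)
  have hlist : (List.range (l + 1)).reverse.map z =
      ((js.map (MvPolynomial.X (R := K))).map (algebraMap _ (Polynomial _))).map
        genericTaylorShiftEquiv.toRingEquiv := by
    simp only [js, List.map_map, ← List.map_coe_finRange_eq_range, List.map_reverse]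
    exact congrArg List.reverse (List.map_congr_left fun i _ => hz_shift (Fin.castLE _ i))
  rw [hlist]
  exact (MvPolynomial.isRegular_map_X hjs).of_faithfullyFlat.map_ringEquiv _
end

section
/- Let K be a field of characteristic zero and A[t] = K[u_0,...,u_d,t] with F(t) = Σ u_i t^i. For l < d and 0 ≤ i ≤ l, the quotient A[t]/(z_l, z_{l-1}, ..., z_{i+1}), where z_j = F^{(j)}(t)/j!, is isomorphic to the polynomial ring K[u_0,...,u_i,u_{l+1},...,u_d,t]; in particular it is an integral domain. -/
open Polynomial MvPolynomial in
/-- Auxiliary: the image of the variable `u_j` under the elimination map. -/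
noncomputable def gAux (K : Type*) [Field K] (d l i : ℕ) (j : ℕ) :
    Polynomial (MvPolynomial {j : Fin (d + 1) // (j : ℕ) ≤ i ∨ l < (j : ℕ)} K) :=
  if hj : j ≤ i ∨ l < j then
    (if h2 : j < d + 1 then Polynomial.C (MvPolynomial.X ⟨⟨j, h2⟩, hj⟩) else 0)
  else
    - ∑ k ∈ (Finset.Ico (j+1) (d+1)).attach,
        (Nat.choose k.1 j) • (gAux K d l i k.1 * Polynomial.X ^ (k.1 - j))
termination_by d + 1 - j
decreasing_by
  · have := Finset.mem_Ico.mp k.2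
    omega

theorem gAux_of_mem (K : Type*) [Field K] (d l i : ℕ) (j : ℕ) (hj : j ≤ i ∨ l < j)
    (h2 : j < d + 1) :
    gAux K d l i j = Polynomial.C (MvPolynomial.X ⟨⟨j, h2⟩, hj⟩) := by
  rw [gAux, dif_pos hj, dif_pos h2]

theorem gAux_of_big (K : Type*) [Field K] (d l i : ℕ) (j : ℕ) (hj : j ≤ i ∨ l < j)
    (h2 : ¬ j < d + 1) : gAux K d l i j = 0 := by
  rw [gAux, dif_pos hj, dif_neg h2]

theorem gAux_of_not (K : Type*) [Field K] (d l i : ℕ) (j : ℕ) (hj : ¬(j ≤ i ∨ l < j)) :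
    gAux K d l i j = - ∑ k ∈ Finset.Ico (j+1) (d+1),
        (Nat.choose k j) • (gAux K d l i k * Polynomial.X ^ (k - j)) := by
  rw [gAux, dif_neg hj, ← Finset.sum_attach (Finset.Ico (j+1) (d+1))
    (fun k => (Nat.choose k j) • (gAux K d l i k * Polynomial.X ^ (k - j)))]

set_option maxHeartbeats 1000000 in
set_option synthInstance.maxHeartbeats 400000 in
/-- With `F(t) = ∑ u_i t^i` over `K[u_0,...,u_d]` and `z_j = F^{(j)}(t)/j!`,
for `i ≤ l < d` the quotient `A[t]/(z_l, ..., z_{i+1})` is isomorphic to the polynomial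
ring `K[u_0,...,u_i,u_{l+1},...,u_d,t]`; in particular it is an integral domain. -/
theorem stmt_2 (K : Type*) [Field K] [CharZero K] (d l i : ℕ) (hl : l < d) (hi : i ≤ l)
    (F : Polynomial (MvPolynomial (Fin (d + 1)) K))
    (hF : F = ∑ j : Fin (d + 1),
        Polynomial.C (MvPolynomial.X j) * Polynomial.X ^ (j : ℕ))
    (z : ℕ → Polynomial (MvPolynomial (Fin (d + 1)) K))
    (hz : ∀ j, z j = ((Nat.factorial j : K)⁻¹) • Polynomial.derivative^[j] F)
    (I : Ideal (Polynomial (MvPolynomial (Fin (d + 1)) K)))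
    (hI : I = Ideal.span (z '' {j | i < j ∧ j ≤ l})) :
    Nonempty ((Polynomial (MvPolynomial (Fin (d + 1)) K) ⧸ I) ≃+*
        Polynomial (MvPolynomial {j : Fin (d + 1) // (j : ℕ) ≤ i ∨ l < (j : ℕ)} K)) ∧
      IsDomain (Polynomial (MvPolynomial (Fin (d + 1)) K) ⧸ I) := by
  classical
  -- the truncated variable function
  set vfun : ℕ → Polynomial (MvPolynomial (Fin (d + 1)) K) := fun k =>
    if h : k < d + 1 then Polynomial.C (MvPolynomial.X ⟨k, h⟩) else 0 with hvfun
  -- z as an explicit sum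
  have zeq : ∀ j, z j = ∑ k : Fin (d + 1),
      (Nat.choose (k : ℕ) j) •
        (Polynomial.C (MvPolynomial.X k) * Polynomial.X ^ ((k : ℕ) - j)) := by
    intro j
    rw [hz, hF, Polynomial.iterate_derivative_sum, Finset.smul_sum]
    refine Finset.sum_congr rfl fun k _ => ?_
    rw [Polynomial.iterate_derivative_C_mul, Polynomial.iterate_derivative_X_pow_eq_smul,
      mul_smul_comm, Nat.cast_smul_eq_nsmul, ← Nat.cast_smul_eq_nsmul K (Nat.descFactorial _ _),
      ← Nat.cast_smul_eq_nsmul K (Nat.choose _ _), smul_smul]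
    congr 1
    rw [Nat.descFactorial_eq_factorial_mul_choose, Nat.cast_mul]
    field_simp
    exact mul_div_cancel_left₀ _ (Nat.cast_ne_zero.mpr (Nat.factorial_ne_zero j))
  -- z as a sum over ℕ, split at the leading term, for i < j ≤ l
  have zeq2 : ∀ j, i < j → j ≤ l → z j = vfun j + ∑ k ∈ Finset.Ico (j+1) (d+1),
      (Nat.choose k j) • (vfun k * Polynomial.X ^ (k - j)) := by
    intro j hij hjl
    have hjd : j < d + 1 := by omega
    have step1 : z j = ∑ k ∈ Finset.range (d + 1),
        (Nat.choose k j) • (vfun k * Polynomial.X ^ (k - j)) := by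
      rw [zeq j, ← Fin.sum_univ_eq_sum_range
        (fun k => (Nat.choose k j) • (vfun k * Polynomial.X ^ (k - j))) (d+1)]
      refine Finset.sum_congr rfl fun k _ => ?_
      congr 2
      simp only [hvfun, dif_pos k.2]
    rw [step1]
    have hsub : Finset.Ico j (d+1) ⊆ Finset.range (d+1) := by
      intro x hx; simp only [Finset.mem_Ico] at hx; simp [hx.2]
    rw [← Finset.sum_subset hsub, Finset.sum_eq_sum_Ico_succ_bot (by omega : j < d + 1)]
    · simp [Nat.choose_self]
    · intro x hx1 hx2
      simp only [Finset.mem_range] at hx1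
      simp only [Finset.mem_Ico, not_and, not_le] at hx2
      have : x < j := by omega
      simp [Nat.choose_eq_zero_of_lt this]
  -- the elimination homomorphism φ : A[t] → R
  set φ : Polynomial (MvPolynomial (Fin (d + 1)) K) →+*
      Polynomial (MvPolynomial {j : Fin (d + 1) // (j : ℕ) ≤ i ∨ l < (j : ℕ)} K) :=
    Polynomial.eval₂RingHom
      (MvPolynomial.eval₂Hom (Polynomial.C.comp MvPolynomial.C)
        (fun k : Fin (d + 1) => gAux K d l i k)) Polynomial.X with hφ
  have hφX : φ Polynomial.X = Polynomial.X := by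
    rw [hφ, Polynomial.coe_eval₂RingHom, Polynomial.eval₂_X]
  have hφC : ∀ k : Fin (d + 1),
      φ (Polynomial.C (MvPolynomial.X k)) = gAux K d l i k := by
    intro k
    rw [hφ, Polynomial.coe_eval₂RingHom, Polynomial.eval₂_C, MvPolynomial.eval₂Hom_X']
  have hφv : ∀ k, φ (vfun k) = gAux K d l i k := by
    intro k
    by_cases h : k < d + 1
    · simp only [hvfun, dif_pos h]
      rw [hφC ⟨k, h⟩]
    · simp only [hvfun, dif_neg h, map_zero]
      rw [gAux_of_big K d l i k (Or.inr (by omega)) h]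
  have hφK : ∀ c : K, φ (Polynomial.C (MvPolynomial.C c)) = Polynomial.C (MvPolynomial.C c) := by
    intro c
    rw [hφ, Polynomial.coe_eval₂RingHom, Polynomial.eval₂_C, MvPolynomial.eval₂Hom_C,
      RingHom.comp_apply]
  -- φ kills the generators
  have hφz : ∀ j, i < j → j ≤ l → φ (z j) = 0 := by
    intro j hij hjl
    rw [zeq2 j hij hjl, map_add, map_sum, hφv]
    have hcongr : ∀ k ∈ Finset.Ico (j+1) (d+1),
        φ ((Nat.choose k j) • (vfun k * Polynomial.X ^ (k - j)))
          = (Nat.choose k j) • (gAux K d l i k * Polynomial.X ^ (k - j)) := by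
      intro k _
      rw [map_nsmul, map_mul, map_pow, hφv, hφX]
    rw [Finset.sum_congr rfl hcongr, gAux_of_not K d l i j (by omega)]
    ring
  have hIker : ∀ a ∈ I, φ a = 0 := by
    intro a ha
    rw [hI] at ha
    have hle : Ideal.span (z '' {j | i < j ∧ j ≤ l}) ≤ RingHom.ker φ := by
      rw [Ideal.span_le]
      rintro x ⟨jj, ⟨h1, h2⟩, rfl⟩
      exact hφz jj h1 h2
    exact hle ha
  set φbar := Ideal.Quotient.lift I φ hIker with hφbar
  -- the inverse map ψ
  set mk := Ideal.Quotient.mk I with hmk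
  set ψ : Polynomial (MvPolynomial {j : Fin (d + 1) // (j : ℕ) ≤ i ∨ l < (j : ℕ)} K) →+*
      (Polynomial (MvPolynomial (Fin (d + 1)) K) ⧸ I) :=
    Polynomial.eval₂RingHom
      (MvPolynomial.eval₂Hom (mk.comp (Polynomial.C.comp MvPolynomial.C))
        (fun s : {j : Fin (d + 1) // (j : ℕ) ≤ i ∨ l < (j : ℕ)} =>
          mk (Polynomial.C (MvPolynomial.X s.1)))) (mk Polynomial.X) with hψ
  have hψK : ∀ c : K,
      ψ (Polynomial.C (MvPolynomial.C c)) = mk (Polynomial.C (MvPolynomial.C c)) := by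
    intro c
    rw [hψ, Polynomial.coe_eval₂RingHom, Polynomial.eval₂_C, MvPolynomial.eval₂Hom_C,
      RingHom.comp_apply, RingHom.comp_apply]
  have hψS : ∀ s : {j : Fin (d + 1) // (j : ℕ) ≤ i ∨ l < (j : ℕ)},
      ψ (Polynomial.C (MvPolynomial.X s)) = mk (Polynomial.C (MvPolynomial.X s.1)) := by
    intro s
    rw [hψ, Polynomial.coe_eval₂RingHom, Polynomial.eval₂_C, MvPolynomial.eval₂Hom_X']
  have hψX : ψ Polynomial.X = mk Polynomial.X := by
    rw [hψ, Polynomial.coe_eval₂RingHom, Polynomial.eval₂_X]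
  have hmkz : ∀ j, i < j → j ≤ l → mk (z j) = 0 := by
    intro j h1 h2
    rw [hmk, Ideal.Quotient.eq_zero_iff_mem, hI]
    exact Ideal.subset_span ⟨j, ⟨h1, h2⟩, rfl⟩
  -- key: ψ inverts gAux
  have hkey : ∀ n j, d + 1 - j ≤ n → ψ (gAux K d l i j) = mk (vfun j) := by
    intro n
    induction n with
    | zero =>
      intro j hjn
      have hjd : ¬ j < d + 1 := by omega
      rw [gAux_of_big K d l i j (Or.inr (by omega)) hjd, map_zero]
      simp only [hvfun, dif_neg hjd, map_zero]
    | succ n ih =>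
      intro j hjn
      by_cases hj : j ≤ i ∨ l < j
      · by_cases h2 : j < d + 1
        · rw [gAux_of_mem K d l i j hj h2, hψS]
          simp only [hvfun, dif_pos h2]
        · rw [gAux_of_big K d l i j hj h2, map_zero]
          simp only [hvfun, dif_neg h2, map_zero]
      · have hij : i < j := by omega
        have hjl : j ≤ l := by omega
        rw [gAux_of_not K d l i j hj, map_neg, map_sum]
        have hcongr : ∀ k ∈ Finset.Ico (j+1) (d+1),
            ψ ((Nat.choose k j) • (gAux K d l i k * Polynomial.X ^ (k - j)))
              = mk ((Nat.choose k j) • (vfun k * Polynomial.X ^ (k - j))) := by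
          intro k hk
          have hk' := Finset.mem_Ico.mp hk
          rw [map_nsmul, map_mul, map_pow, hψX, ih k (by omega), map_nsmul, map_mul, map_pow]
        rw [Finset.sum_congr rfl hcongr]
        have hmz := congrArg mk (zeq2 j hij hjl)
        rw [map_add, hmkz j hij hjl, map_sum] at hmz
        linear_combination hmz
  have hψg : ∀ k : Fin (d + 1), ψ (gAux K d l i k) = mk (Polynomial.C (MvPolynomial.X k)) := by
    intro k
    rw [hkey (d + 1) k (by omega)]
    simp only [hvfun, dif_pos k.2]
  -- the two compositions
  have comp1 : φbar.comp ψ = RingHom.id _ := by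
    apply Polynomial.ringHom_ext'
    · apply MvPolynomial.ringHom_ext
      · intro c
        simp only [RingHom.comp_apply, RingHom.id_apply]
        rw [hψK, hφbar, hmk, Ideal.Quotient.lift_mk, hφK]
      · intro s
        simp only [RingHom.comp_apply, RingHom.id_apply]
        rw [hψS, hφbar, hmk, Ideal.Quotient.lift_mk, hφC, gAux_of_mem K d l i s.1 s.2 s.1.2]
    · simp only [RingHom.comp_apply, RingHom.id_apply]
      rw [hψX, hφbar, hmk, Ideal.Quotient.lift_mk, hφX]
  have comp2 : ψ.comp φbar = RingHom.id _ := by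
    have hmain : (ψ.comp φbar).comp mk = (RingHom.id _).comp mk := by
      rw [RingHom.comp_assoc]
      have hlift : φbar.comp mk = φ := by
        apply RingHom.ext; intro a; rw [hφbar, hmk, RingHom.comp_apply, Ideal.Quotient.lift_mk]
      rw [hlift]
      apply Polynomial.ringHom_ext'
      · apply MvPolynomial.ringHom_ext
        · intro c
          simp only [RingHom.comp_apply, RingHom.id_apply]
          rw [hφK, hψK]
        · intro k
          simp only [RingHom.comp_apply, RingHom.id_apply]
          rw [hφC, hψg]
      · simp only [RingHom.comp_apply, RingHom.id_apply]
        rw [hφX, hψX]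
    apply RingHom.ext
    intro a
    obtain ⟨b, rfl⟩ := Ideal.Quotient.mk_surjective (I := I) a
    exact congrArg (fun f => f b) hmain
  have e := RingEquiv.ofRingHom φbar ψ comp1 comp2
  exact ⟨⟨e⟩, Function.Injective.isDomain e.toRingHom e.injective⟩
end

section
/- Let K be a field of characteristic zero, V an (n+1)-dimensional vector space with basis e_0,...,e_n, 𝔤 = 𝔰𝔩(V), L = K·e_0, and L^d = K·e_0^d ⊆ Sym^d(V). For 1 ≤ l < d, the subspace U_l(𝔤)·L^d of Sym^d(V) spanned by {x_1⋯x_k·(e_0^d) : 0 ≤ k ≤ l, x_j ∈ 𝔤} equals the subspace e_0^{d−l}·Sym^l(V) = span{e_0^{d−l} v_1 ⋯ v_l : v_j ∈ V}; in particular dim_K U_l(𝔤)·L^d = C(n+l, n). -/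
/-!
Each `D_x` preserves degree, and by Leibniz
`D_x (X_o^(a+1) q) = X_o^a ((a+1) D_x(X_o) q + X_o D_x q)`, so a word of length `k ≤ l` in the
`D_x` sends `X_o^d` into `X_o^(d-k) Sym^k(V) ⊆ X_o^(d-l) Sym^l(V)`. Conversely, for `i ≠ o` the
traceless elementary matrix `E_io` acts as `X_i ∂/∂X_o`, which trades one factor `X_o` for `X_i`
up to the exponent of `X_o` as a scalar, nonzero in characteristic zero; so every monomial
`X_o^(d-l) X^s` with `|s| = l` is reached by a word of length at most `l`. Multiplication by
`X_o^(d-l)` is injective, and there are `C(n+l, n)` monomials of degree `l` in `n+1` variables.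
-/

open MvPolynomial

namespace MvPolynomial

theorem IsHomogeneous.mkDerivation {σ R : Type*} [CommSemiring R]
    {f : σ → MvPolynomial σ R} (hf : ∀ i, (f i).IsHomogeneous 1)
    {p : MvPolynomial σ R} {k : ℕ} (hp : p.IsHomogeneous k) :
    (mkDerivation R f p).IsHomogeneous k := by
  classical
  change _ ∈ homogeneousSubmodule σ R k
  rw [p.as_sum, map_sum]
  refine Submodule.sum_mem _ fun s hs => ?_
  rw [mkDerivation_monomial]
  refine Submodule.smul_mem _ _ (Submodule.sum_mem _ fun i hi => ?_)
  have hle : Finsupp.single i 1 ≤ s :=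
    Finsupp.single_le_iff.mpr (Finsupp.mem_support_iff.mp hi).bot_lt
  have hdeg : (s - Finsupp.single i 1).degree + 1 = k := by
    have hsplit := congrArg Finsupp.degree (tsub_add_cancel_of_le hle)
    rw [map_add, Finsupp.degree_single] at hsplit
    rw [hsplit, Finsupp.degree_eq_weight_one]
    exact hp (mem_support_iff.mp hs)
  rw [← hdeg]
  exact (isHomogeneous_monomial _ rfl).mul (hf i)

section MatrixAction

variable {σ K : Type*} [Fintype σ] [CommSemiring K]

noncomputable def matrixDerivation (x : Matrix σ σ K) :
    Derivation K (MvPolynomial σ K) (MvPolynomial σ K) :=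
  mkDerivation K fun i => ∑ j, C (x j i) * X j

theorem matrixDerivation_X (x : Matrix σ σ K) (i : σ) :
    matrixDerivation x (X i) = ∑ j, C (x j i) * X j :=
  mkDerivation_X _ _ _

theorem IsHomogeneous.matrixDerivation (x : Matrix σ σ K) {p : MvPolynomial σ K} {k : ℕ}
    (hp : p.IsHomogeneous k) : (matrixDerivation x p).IsHomogeneous k :=
  hp.mkDerivation fun _ => IsHomogeneous.sum _ _ _ fun _ _ => isHomogeneous_C_mul_X _ _

variable [DecidableEq σ]

theorem matrixDerivation_single_one (i j : σ) :
    matrixDerivation (Matrix.single i j (1 : K)) = (X i : MvPolynomial σ K) • pderiv j := by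
  refine derivation_ext fun v => ?_
  by_cases hv : v = j
  · subst hv
    simp [matrixDerivation_X, Matrix.single_apply]
  · simp [matrixDerivation_X, Ne.symm hv, pderiv_X]

theorem matrixDerivation_single_one_monomial (i j : σ) (τ : σ →₀ ℕ) :
    matrixDerivation (Matrix.single i j (1 : K)) (monomial (τ + Finsupp.single j 1) 1) =
      (τ j + 1) • monomial (τ + Finsupp.single i 1) (1 : K) := by
  rw [matrixDerivation_single_one, Derivation.smul_apply, pderiv_monomial, add_tsub_cancel_right,
    smul_eq_mul, X, monomial_mul, smul_monomial, add_comm (Finsupp.single i 1)]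
  simp

end MatrixAction

section Filtration

variable (K : Type*) {σ : Type*} [CommSemiring K]

/-- `e_o^(d-k) Sym^k(V)` inside `Sym^d(V)`. -/
noncomputable def xPowMulHomogeneous (o : σ) (d k : ℕ) : Submodule K (MvPolynomial σ K) :=
  (homogeneousSubmodule σ K k).map (LinearMap.mulLeft K (X o ^ (d - k)))

variable {K} {o : σ} {d : ℕ}

theorem span_setOf_X_pow_mul_homogeneous (l : ℕ) :
    Submodule.span K {p | ∃ q ∈ homogeneousSubmodule σ K l, p = X o ^ (d - l) * q} =
      xPowMulHomogeneous K o d l := by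
  rw [← Submodule.span_eq (xPowMulHomogeneous K o d l)]
  congr 1
  ext p
  simp [xPowMulHomogeneous, eq_comm]

theorem xPowMulHomogeneous_mono {k l : ℕ} (hkl : k ≤ l) (hld : l ≤ d) :
    xPowMulHomogeneous K o d k ≤ xPowMulHomogeneous K o d l := by
  rintro _ ⟨q, hq, rfl⟩
  refine ⟨X o ^ (l - k) * q, ?_, ?_⟩
  · have h := (isHomogeneous_X_pow o (l - k)).mul hq
    rwa [Nat.sub_add_cancel hkl] at h
  · simp only [LinearMap.mulLeft_apply, ← mul_assoc, ← pow_add]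
    congr 2
    omega

theorem xPowMulHomogeneous_eq_span_monomial (l : ℕ) :
    xPowMulHomogeneous K o d l = Submodule.span K
      ((fun s => monomial (Finsupp.single o (d - l) + s) (1 : K)) '' {s | s.degree = l}) := by
  rw [xPowMulHomogeneous, homogeneousSubmodule_eq_finsupp_supported]
  change (restrictSupport K _).map _ = _
  rw [restrictSupport_eq_span, Submodule.map_span, Set.image_image]
  simp [X_pow_eq_monomial, monomial_mul]

end Filtration

section EnvelopingSpan

variable (K : Type*) {σ : Type*} [CommSemiring K] [Fintype σ]

/-- `U_l(𝔰𝔩(V)) · K e_o^d`, spanned by the words of length at most `l` in traceless matrices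
applied to `X_o^d`. -/
noncomputable def envelopingSpan (o : σ) (d l : ℕ) :
    Submodule K (MvPolynomial σ K) :=
  Submodule.span K {p | ∃ xs : List (Matrix σ σ K), xs.length ≤ l ∧ (∀ x ∈ xs, x.trace = 0) ∧
    p = xs.foldr (fun x q => matrixDerivation x q) (X o ^ d)}

variable {K} {o : σ} {d : ℕ}

theorem matrixDerivation_mem_xPowMulHomogeneous (x : Matrix σ σ K) {k : ℕ} {p : MvPolynomial σ K}
    (hp : p ∈ xPowMulHomogeneous K o d k) (hk : k < d) :
    matrixDerivation x p ∈ xPowMulHomogeneous K o d (k + 1) := by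
  obtain ⟨q, hq, rfl⟩ := hp
  set a := d - (k + 1)
  have hdk : d - k = a + 1 := by omega
  refine ⟨matrixDerivation x q * X o + (a + 1) • (q * matrixDerivation x (X o)), ?_, ?_⟩
  · exact add_mem ((hq.matrixDerivation x).mul (isHomogeneous_X K o))
      (Submodule.smul_of_tower_mem _ _ (hq.mul ((isHomogeneous_X K o).matrixDerivation x)))
  · simp only [LinearMap.mulLeft_apply, hdk, Derivation.leibniz, Derivation.leibniz_pow,
      smul_eq_mul, nsmul_eq_mul, Nat.add_sub_cancel, Nat.cast_add, Nat.cast_one]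
    ring

theorem foldr_matrixDerivation_mem_xPowMulHomogeneous (xs : List (Matrix σ σ K))
    (hxs : xs.length ≤ d) :
    xs.foldr (fun x q => matrixDerivation x q) (X o ^ d) ∈
      xPowMulHomogeneous K o d xs.length := by
  induction xs with
  | nil => exact ⟨1, isHomogeneous_one σ K, by simp⟩
  | cons x xs ih =>
    rw [List.length_cons] at hxs ⊢
    exact matrixDerivation_mem_xPowMulHomogeneous x (ih (by omega)) (by omega)

theorem envelopingSpan_le_xPowMulHomogeneous {l : ℕ} (hld : l ≤ d) :
    envelopingSpan K o d l ≤ xPowMulHomogeneous K o d l := by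
  refine Submodule.span_le.mpr ?_
  rintro _ ⟨xs, hxs, -, rfl⟩
  exact xPowMulHomogeneous_mono hxs hld
    (foldr_matrixDerivation_mem_xPowMulHomogeneous xs (hxs.trans hld))

theorem envelopingSpan_mono {l l' : ℕ} (hll' : l ≤ l') :
    envelopingSpan K o d l ≤ envelopingSpan K o d l' :=
  Submodule.span_mono fun _ ⟨xs, hxs, htr, hp⟩ => ⟨xs, hxs.trans hll', htr, hp⟩

theorem matrixDerivation_mem_envelopingSpan {x : Matrix σ σ K} (hx : x.trace = 0) {l : ℕ}
    {p : MvPolynomial σ K} (hp : p ∈ envelopingSpan K o d l) :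
    matrixDerivation x p ∈ envelopingSpan K o d (l + 1) := by
  refine (Submodule.span_le (p := (envelopingSpan K o d (l + 1)).comap
    (matrixDerivation x).toLinearMap)).mpr ?_ hp
  rintro _ ⟨xs, hxs, htr, rfl⟩
  refine Submodule.subset_span ⟨x :: xs, by simpa using hxs, ?_, rfl⟩
  simpa [hx] using htr

end EnvelopingSpan

section Field

variable {K σ : Type*} [Field K] [Fintype σ] {o : σ} {d : ℕ}

theorem monomial_mem_envelopingSpan [CharZero K] (s : σ →₀ ℕ) (a : ℕ) :
    monomial (Finsupp.single o a + s) (1 : K) ∈ envelopingSpan K o (a + s.degree) s.degree := by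
  classical
  induction hk : s.degree generalizing s a with
  | zero =>
    rw [Finsupp.degree_eq_zero_iff] at hk
    subst hk
    exact Submodule.subset_span ⟨[], le_rfl, by simp, by simp [X_pow_eq_monomial]⟩
  | succ k ih =>
    obtain ⟨i, hi⟩ : s.support.Nonempty := by
      rw [Finsupp.support_nonempty_iff]
      rintro rfl
      simp at hk
    obtain ⟨s, rfl⟩ : ∃ s', s = s' + Finsupp.single i 1 :=
      le_iff_exists_add'.mp (Finsupp.single_le_iff.mpr (Finsupp.mem_support_iff.mp hi).bot_lt)
    have hs : s.degree = k := by simpa using hk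
    have h := ih s (a + 1) hs
    rw [show a + (k + 1) = a + 1 + k by omega]
    by_cases hio : i = o
    · subst hio
      rw [show Finsupp.single i a + (s + Finsupp.single i 1) = Finsupp.single i (a + 1) + s by
        rw [Finsupp.single_add]; abel]
      exact envelopingSpan_mono k.le_succ h
    · have hD := matrixDerivation_mem_envelopingSpan
        (Matrix.trace_single_eq_of_ne i o (1 : K) hio) h
      rw [show Finsupp.single o (a + 1) + s = Finsupp.single o a + s + Finsupp.single o 1 by
        rw [Finsupp.single_add]; abel, matrixDerivation_single_one_monomial,
        ← Nat.cast_smul_eq_nsmul K] at hD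
      rw [← add_assoc]
      exact (Submodule.smul_mem_iff _ (Nat.cast_ne_zero.mpr (Nat.succ_ne_zero _))).mp hD

theorem xPowMulHomogeneous_le_envelopingSpan [CharZero K] {l : ℕ} (hld : l ≤ d) :
    xPowMulHomogeneous K o d l ≤ envelopingSpan K o d l := by
  rw [xPowMulHomogeneous_eq_span_monomial, Submodule.span_le]
  rintro _ ⟨s, rfl : s.degree = l, rfl⟩
  simpa [Nat.sub_add_cancel hld] using monomial_mem_envelopingSpan s (d - s.degree)

theorem envelopingSpan_eq_xPowMulHomogeneous [CharZero K] {l : ℕ} (hld : l ≤ d) :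
    envelopingSpan K o d l = xPowMulHomogeneous K o d l :=
  (envelopingSpan_le_xPowMulHomogeneous hld).antisymm (xPowMulHomogeneous_le_envelopingSpan hld)

theorem finrank_homogeneousSubmodule (l : ℕ) :
    Module.finrank K (homogeneousSubmodule σ K l) = (Fintype.card σ).multichoose l := by
  classical
  have hdeg : {s : σ →₀ ℕ | s.degree = l} =
      ((Finset.univ.finsuppAntidiag l : Finset (σ →₀ ℕ)) : Set (σ →₀ ℕ)) := by
    ext s
    simp [Finsupp.degree_eq_sum]
  rw [homogeneousSubmodule_eq_finsupp_supported, hdeg]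
  change Module.finrank K (restrictSupport K _) = _
  rw [Module.finrank_eq_card_basis (basisRestrictSupport K _)]
  simp [Finset.card_finsuppAntidiag_nat_eq_multichoose]

theorem finrank_xPowMulHomogeneous (l : ℕ) :
    Module.finrank K (xPowMulHomogeneous K o d l) = (Fintype.card σ).multichoose l := by
  have hinj : Function.Injective (LinearMap.mulLeft K (X o ^ (d - l) : MvPolynomial σ K)) :=
    mul_right_injective₀ (pow_ne_zero _ (X_ne_zero o))
  rw [xPowMulHomogeneous, ← (Submodule.equivMapOfInjective _ hinj _).finrank_eq,
    finrank_homogeneousSubmodule]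

end Field

end MvPolynomial

theorem stmt_19_general (K : Type*) [Field K] [CharZero K] (n d l : ℕ)
    (hld : l < d)
    (D : Matrix (Fin (n + 1)) (Fin (n + 1)) K →
      Derivation K (MvPolynomial (Fin (n + 1)) K) (MvPolynomial (Fin (n + 1)) K))
    (hD : ∀ x, D x = mkDerivation K (fun i => ∑ j, C (x j i) * X j))
    (S : Set (MvPolynomial (Fin (n + 1)) K))
    (hS : S = {p | ∃ xs : List (Matrix (Fin (n + 1)) (Fin (n + 1)) K),
        xs.length ≤ l ∧ (∀ x ∈ xs, x.trace = 0) ∧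
        p = xs.foldr (fun x q => D x q) ((X 0 : MvPolynomial (Fin (n + 1)) K) ^ d)}) :
    Submodule.span K S =
      Submodule.span K {p | ∃ q ∈ homogeneousSubmodule (Fin (n + 1)) K l,
        p = (X 0 : MvPolynomial (Fin (n + 1)) K) ^ (d - l) * q} ∧
    Module.finrank K ↥(Submodule.span K S) = Nat.choose (n + l) n := by
  obtain rfl : D = matrixDerivation := funext hD
  have hspan : Submodule.span K S = xPowMulHomogeneous K 0 d l := by
    rw [hS]
    exact envelopingSpan_eq_xPowMulHomogeneous hld.le
  refine ⟨hspan.trans (span_setOf_X_pow_mul_homogeneous l).symm, ?_⟩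
  rw [hspan, finrank_xPowMulHomogeneous, Fintype.card_fin, Nat.multichoose_eq,
    Nat.add_right_comm n 1 l, Nat.add_sub_cancel, Nat.choose_symm_add]

/-- With `Sym(V)` for `V = K^{n+1}` (basis `e_0,...,e_n`) realized as
`K[X_0,...,X_n]`, `L^d = K·e_0^d = K·X_0^d`, and `𝔤 = 𝔰𝔩(V)` acting by derivations
(`D x (X_i) = ∑_j x_{ji} X_j` for traceless `x`), for `1 ≤ l < d` the subspace
`U_l(𝔤)·L^d` — the span of all `x_1⋯x_k·(e_0^d)` with `k ≤ l`, `x_j ∈ 𝔤` — equals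
`e_0^{d−l}·Sym^l(V)`, the span of `X_0^{d−l}·q` for `q` homogeneous of degree `l`;
in particular its dimension is `C(n+l, n)`. -/
theorem stmt_19 (K : Type*) [Field K] [CharZero K] (n d l : ℕ)
    (hn : 1 ≤ n) (hl : 1 ≤ l) (hld : l < d)
    (D : Matrix (Fin (n + 1)) (Fin (n + 1)) K →
      Derivation K (MvPolynomial (Fin (n + 1)) K) (MvPolynomial (Fin (n + 1)) K))
    (hD : ∀ x, D x = mkDerivation K (fun i => ∑ j, C (x j i) * X j))
    (S : Set (MvPolynomial (Fin (n + 1)) K))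
    (hS : S = {p | ∃ xs : List (Matrix (Fin (n + 1)) (Fin (n + 1)) K),
        xs.length ≤ l ∧ (∀ x ∈ xs, x.trace = 0) ∧
        p = xs.foldr (fun x q => D x q) ((X 0 : MvPolynomial (Fin (n + 1)) K) ^ d)}) :
    Submodule.span K S =
      Submodule.span K {p | ∃ q ∈ homogeneousSubmodule (Fin (n + 1)) K l,
        p = (X 0 : MvPolynomial (Fin (n + 1)) K) ^ (d - l) * q} ∧
    Module.finrank K ↥(Submodule.span K S) = Nat.choose (n + l) n :=
  stmt_19_general K n d l hld D hD S hS
end
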